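/- Let m be a positive integer and let b(x) = (sin(mx/2)/sin(x/2))^4. Let f : ℝ → ℝ be 2π-periodic and Lipschitz continuous with Lipschitz constant λ. Define f̃(x) = (∫_{−π}^{π} b(u) f(x − u) du) / (∫_{−π}^{π} b(u) du). Then for every x ∈ ℝ, |f̃(x) − f(x)| ≤ 9λ/m. -/

import Mathlib

/-! The error `f̃ x - f x` is the `b`-weighted average of `f (x - u) - f x`, which is at most
`λ |u|`, so it is bounded by `λ (∫ b(u) |u|) / ∫ b`.

Upper moment: `|sin (m s)| ≤ m |sin s|` gives `b ≤ m⁴`, and Jordan's inequality `sin (u/2) ≥ u/π`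
gives `b(u) ≤ (π/u)⁴` on `(0, π]`; splitting `∫₀^π b(u) u` at `π/m` yields `∫ b |u| ≤ 2π²m²`.

Lower mass: `sin s ≥ s - s³/6` and Bernoulli's inequality give `b(u) ≥ m⁴ (1 - (mu)²/6)` for
`|u| ≤ 2/m`, and integrating over `[-2/m, 2/m]` yields `∫ b ≥ 28m³/9`.

The ratio is `9π²λ/(14m) ≤ 9λ/m`. -/

open MeasureTheory

/-- The Jackson kernel of parameter `m`: `b(x) = (sin(mx/2)/sin(x/2))^4`.
(At multiples of `2π` this formula gives the junk value `0`, but the kernel only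
appears inside integrals, which are unaffected by this measure-zero set.) -/
noncomputable def jacksonKernel (m : ℕ) (x : ℝ) : ℝ :=
  (Real.sin (m * x / 2) / Real.sin (x / 2)) ^ 4

open Real intervalIntegral

theorem abs_sin_nat_mul_le (n : ℕ) (x : ℝ) : |sin (n * x)| ≤ n * |sin x| := by
  induction n with
  | zero => simp
  | succ k ih =>
    calc |sin ((k + 1 : ℕ) * x)| = |sin (k * x) * cos x + cos (k * x) * sin x| := by
          push_cast; rw [add_mul, one_mul, sin_add]
      _ ≤ |sin (k * x)| * |cos x| + |cos (k * x)| * |sin x| := by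
          rw [← abs_mul, ← abs_mul]; exact abs_add_le _ _
      _ ≤ k * |sin x| * 1 + 1 * |sin x| := by
          gcongr <;> exact abs_cos_le_one _
      _ = (k + 1 : ℕ) * |sin x| := by push_cast; ring

theorem integral_eq_two_mul_integral_of_even {g : ℝ → ℝ} (hg : ∀ u, g (-u) = g u) (a : ℝ)
    (hint : IntervalIntegrable g volume (-a) a) :
    ∫ u in (-a)..a, g u = 2 * ∫ u in (0 : ℝ)..a, g u := by
  have hneg : ∫ u in (-a)..0, g u = ∫ u in (0 : ℝ)..a, g u := by
    simpa only [neg_zero, hg] using (integral_comp_neg (a := 0) (b := a) g).symm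
  have hzero : (0 : ℝ) ∈ Set.uIcc (-a) a := by
    rcases le_total 0 a with h | h <;> simp [h]
  rw [← integral_add_adjacent_intervals (hint.mono_set (Set.uIcc_subset_uIcc_left hzero))
    (hint.mono_set (Set.uIcc_subset_uIcc_right hzero)), hneg, two_mul]

theorem nat_mul_one_sub_le_sin_nat_mul_div_sin {m : ℕ} (hm : 0 < m) {t : ℝ} (ht : 0 < t)
    (hmt : m * t ≤ 1) : m * (1 - (m * t) ^ 2 / 6) ≤ sin (m * t) / sin t := by
  have hmt0 : 0 < m * t := mul_pos (Nat.cast_pos.2 hm) ht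
  have hsin_pos : 0 < sin t := by
    have hm1 : (1 : ℝ) ≤ m := Nat.one_le_cast.2 hm
    exact sin_pos_of_pos_of_lt_pi ht (by nlinarith [pi_gt_three])
  have hcube : 0 ≤ m * t * (1 - (m * t) ^ 2 / 6) :=
    mul_nonneg hmt0.le (by linarith [pow_le_one₀ (n := 2) hmt0.le hmt])
  calc m * (1 - (m * t) ^ 2 / 6) = m * t * (1 - (m * t) ^ 2 / 6) / t := by field_simp
    _ ≤ m * t * (1 - (m * t) ^ 2 / 6) / sin t :=
        div_le_div_of_nonneg_left hcube hsin_pos (sin_lt ht).le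
    _ ≤ sin (m * t) / sin t := by
        gcongr; linarith [sin_gt_sub_cube hmt0]

namespace jacksonKernel

theorem nonneg (m : ℕ) (u : ℝ) : 0 ≤ jacksonKernel m u := by
  unfold jacksonKernel; positivity

theorem neg (m : ℕ) (u : ℝ) : jacksonKernel m (-u) = jacksonKernel m u := by
  simp only [jacksonKernel, mul_neg, neg_div, sin_neg, div_neg, neg_neg]

theorem le_pow_four_of_abs_sin_le {m : ℕ} {u C : ℝ} (hC : 0 ≤ C)
    (h : |sin (m * u / 2)| ≤ C * |sin (u / 2)|) : jacksonKernel m u ≤ C ^ 4 := by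
  rw [jacksonKernel, ← Even.pow_abs (by decide), abs_div]
  gcongr
  -- also covers `sin (u / 2) = 0`, where the quotient takes the junk value `0`
  exact div_le_of_le_mul₀ (abs_nonneg _) hC h

theorem le_pow (m : ℕ) (u : ℝ) : jacksonKernel m u ≤ (m : ℝ) ^ 4 :=
  le_pow_four_of_abs_sin_le m.cast_nonneg (by
    simpa only [mul_div_assoc] using abs_sin_nat_mul_le m (u / 2))

theorem le_pi_div_pow {m : ℕ} {u : ℝ} (hu : 0 < u) (huπ : u ≤ π) :
    jacksonKernel m u ≤ (π / u) ^ 4 := by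
  refine le_pow_four_of_abs_sin_le (by positivity) ?_
  have hjordan : 2 / π * (u / 2) ≤ sin (u / 2) := mul_le_sin (by positivity) (by linarith)
  calc |sin (m * u / 2)| ≤ 1 := abs_sin_le_one _
    _ = π / u * (2 / π * (u / 2)) := by field_simp
    _ ≤ π / u * |sin (u / 2)| := by gcongr; exact hjordan.trans (le_abs_self _)

theorem pow_mul_one_sub_le {m : ℕ} (hm : 0 < m) {u : ℝ} (hu : u ≠ 0) (hmu : m * |u| ≤ 2) :
    (m : ℝ) ^ 4 * (1 - (m * u) ^ 2 / 6) ≤ jacksonKernel m u := by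
  suffices h : ∀ v : ℝ, 0 < v → m * v ≤ 2 →
      (m : ℝ) ^ 4 * (1 - (m * v) ^ 2 / 6) ≤ jacksonKernel m v by
    rcases hu.lt_or_gt with hu | hu
    · simpa only [neg, mul_neg, neg_sq] using
        h (-u) (neg_pos.2 hu) (by rwa [abs_of_neg hu] at hmu)
    · exact h u hu (by rwa [abs_of_pos hu] at hmu)
  intro v hv hmv
  have hmv0 : 0 ≤ m * (v / 2) := by positivity
  have hsq : (m * (v / 2)) ^ 2 ≤ 1 := pow_le_one₀ hmv0 (by linarith)
  have hratio := nat_mul_one_sub_le_sin_nat_mul_div_sin hm (half_pos hv) (by linarith)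
  calc (m : ℝ) ^ 4 * (1 - (m * v) ^ 2 / 6)
        = m ^ 4 * (1 + (4 : ℕ) * -((m * (v / 2)) ^ 2 / 6)) := by push_cast; ring
    _ ≤ m ^ 4 * (1 + -((m * (v / 2)) ^ 2 / 6)) ^ 4 := by
        gcongr; exact one_add_mul_le_pow (by linarith) 4
    _ = (m * (1 - (m * (v / 2)) ^ 2 / 6)) ^ 4 := by ring
    _ ≤ jacksonKernel m v := by
        rw [jacksonKernel, mul_div_assoc]
        exact pow_le_pow_left₀ (mul_nonneg m.cast_nonneg (by linarith)) hratio 4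

theorem intervalIntegrable (m : ℕ) (a b : ℝ) : IntervalIntegrable (jacksonKernel m) volume a b :=
  (intervalIntegrable_const (c := (m : ℝ) ^ 4)).mono_fun
    (by unfold jacksonKernel; fun_prop : Measurable (jacksonKernel m)).aestronglyMeasurable
    (ae_of_all _ fun u => by
      simpa only [Real.norm_eq_abs, abs_of_nonneg (nonneg m u), abs_pow, Nat.abs_cast]
        using le_pow m u)

theorem mul_pow_three_le_integral {m : ℕ} (hm : 0 < m) :
    28 * (m : ℝ) ^ 3 / 9 ≤ ∫ u in (-π)..π, jacksonKernel m u := by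
  have hm0 : (0 : ℝ) < m := Nat.cast_pos.2 hm
  set c : ℝ := 2 / m with hc
  have hc0 : 0 < c := by positivity
  have hcπ : c ≤ π :=
    (div_le_self zero_le_two (Nat.one_le_cast.2 hm)).trans (by linarith [pi_gt_three])
  have hbound : ∀ᵐ u ∂volume.restrict (Set.Icc (-c) c),
      (m : ℝ) ^ 4 * (1 - (m * u) ^ 2 / 6) ≤ jacksonKernel m u := by
    filter_upwards [ae_restrict_mem measurableSet_Icc,
      ae_restrict_of_ae ((Set.countable_singleton (0 : ℝ)).ae_notMem volume)] with u hu hu0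
    refine pow_mul_one_sub_le hm hu0 ?_
    rw [← le_div_iff₀' hm0]
    exact abs_le.2 hu
  calc 28 * (m : ℝ) ^ 3 / 9 = ∫ u in (-c)..c, (m : ℝ) ^ 4 * (1 - (m * u) ^ 2 / 6) := by
        rw [intervalIntegral.integral_const_mul,
          integral_comp_mul_left (fun v => 1 - v ^ 2 / 6) hm0.ne',
          integral_sub intervalIntegrable_const (Continuous.intervalIntegrable (by fun_prop) _ _),
          intervalIntegral.integral_div, integral_pow, intervalIntegral.integral_const, hc,
          smul_eq_mul, mul_neg, mul_div_cancel₀ _ hm0.ne']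
        field_simp
        norm_num
    _ ≤ ∫ u in (-c)..c, jacksonKernel m u :=
        integral_mono_ae_restrict (by linarith) (Continuous.intervalIntegrable (by fun_prop) _ _)
          (intervalIntegrable m _ _) hbound
    _ ≤ ∫ u in (-π)..π, jacksonKernel m u :=
        integral_mono_interval (by linarith) (by linarith) hcπ (ae_of_all _ (nonneg m))
          (intervalIntegrable m _ _)

theorem integral_mul_self_le_pow_mul_sq {m : ℕ} {c : ℝ} (hc : 0 ≤ c) :
    ∫ u in (0 : ℝ)..c, jacksonKernel m u * u ≤ (m : ℝ) ^ 4 * c ^ 2 / 2 :=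
  calc ∫ u in (0 : ℝ)..c, jacksonKernel m u * u ≤ ∫ u in (0 : ℝ)..c, (m : ℝ) ^ 4 * u :=
        integral_mono_on hc ((intervalIntegrable m _ _).mul_continuousOn continuousOn_id)
          (Continuous.intervalIntegrable (by fun_prop) _ _)
          fun u hu => mul_le_mul_of_nonneg_right (le_pow m u) hu.1
    _ = (m : ℝ) ^ 4 * c ^ 2 / 2 := by
        rw [intervalIntegral.integral_const_mul, integral_id]; ring

theorem integral_mul_self_le_pi_pow_div {m : ℕ} {c : ℝ} (hc : 0 < c) (hcπ : c ≤ π) :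
    ∫ u in c..π, jacksonKernel m u * u ≤ π ^ 4 / (2 * c ^ 2) := by
  have h0 : (0 : ℝ) ∉ Set.uIcc c π := by
    rw [Set.uIcc_of_le hcπ]; exact fun h => (h.1.trans_lt' hc).false
  calc ∫ u in c..π, jacksonKernel m u * u ≤ ∫ u in c..π, π ^ 4 * u ^ (-3 : ℤ) :=
        integral_mono_on hcπ ((intervalIntegrable m _ _).mul_continuousOn continuousOn_id)
          ((intervalIntegrable_zpow (Or.inr h0)).const_mul _) fun u hu => by
            have hu0 : 0 < u := hc.trans_le hu.1
            calc jacksonKernel m u * u ≤ (π / u) ^ 4 * u := by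
                  gcongr; exact le_pi_div_pow hu0 hu.2
              _ = π ^ 4 * u ^ (-3 : ℤ) := by
                  rw [zpow_neg, zpow_ofNat]; field_simp
    _ ≤ π ^ 4 / (2 * c ^ 2) := by
        rw [intervalIntegral.integral_const_mul, integral_zpow (Or.inr ⟨by norm_num, h0⟩)]
        norm_num
        have : 0 ≤ π ^ 4 * ((π ^ 2)⁻¹ / 2) := by positivity
        linarith [show π ^ 4 * (((π ^ 2)⁻¹ - (c ^ 2)⁻¹) / -2)
          = π ^ 4 / (2 * c ^ 2) - π ^ 4 * ((π ^ 2)⁻¹ / 2) by ring]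

theorem integral_mul_abs_le {m : ℕ} (hm : 0 < m) :
    ∫ u in (-π)..π, jacksonKernel m u * |u| ≤ 2 * π ^ 2 * m ^ 2 := by
  have hm0 : (0 : ℝ) < m := Nat.cast_pos.2 hm
  have hc0 : 0 < π / m := by positivity
  have hcπ : π / m ≤ π := div_le_self pi_pos.le (Nat.one_le_cast.2 hm)
  have hint : ∀ a b : ℝ, IntervalIntegrable (fun u => jacksonKernel m u * u) volume a b :=
    fun a b => (intervalIntegrable m a b).mul_continuousOn continuousOn_id
  have hsplit : ∫ u in (0 : ℝ)..π, jacksonKernel m u * |u|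
      = (∫ u in (0 : ℝ)..π / m, jacksonKernel m u * u)
        + ∫ u in π / m..π, jacksonKernel m u * u := by
    rw [integral_add_adjacent_intervals (hint _ _) (hint _ _)]
    refine integral_congr fun u hu => ?_
    rw [Set.uIcc_of_le pi_pos.le] at hu
    simp only [abs_of_nonneg hu.1]
  rw [integral_eq_two_mul_integral_of_even (fun u => by rw [neg, abs_neg])
    _ ((intervalIntegrable m _ _).mul_continuousOn continuous_abs.continuousOn), hsplit]
  have hnear := integral_mul_self_le_pow_mul_sq (m := m) hc0.le
  have htail := integral_mul_self_le_pi_pow_div (m := m) hc0 hcπ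
  have hnear_eq : (m : ℝ) ^ 4 * (π / m) ^ 2 / 2 = π ^ 2 * m ^ 2 / 2 := by field_simp
  have htail_eq : π ^ 4 / (2 * (π / m) ^ 2) = π ^ 2 * m ^ 2 / 2 := by field_simp
  linarith

end jacksonKernel

theorem abs_integral_mul_div_integral_sub_le {k φ : ℝ → ℝ} {a b y L : ℝ} (hab : a ≤ b)
    (hk0 : ∀ u, 0 ≤ k u) (hk : IntervalIntegrable k volume a b)
    (hφ : ContinuousOn φ (Set.uIcc a b))
    (hφy : ∀ u ∈ Set.Icc a b, |φ u - y| ≤ L * |u|) (hpos : 0 < ∫ u in a..b, k u) :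
    |(∫ u in a..b, k u * φ u) / (∫ u in a..b, k u) - y|
      ≤ L * (∫ u in a..b, k u * |u|) / ∫ u in a..b, k u := by
  have hkφ : IntervalIntegrable (fun u => k u * φ u) volume a b := hk.mul_continuousOn hφ
  have hkφy : IntervalIntegrable (fun u => k u * (φ u - y)) volume a b :=
    hk.mul_continuousOn (hφ.sub continuousOn_const)
  have hdiff : (∫ u in a..b, k u * φ u) / (∫ u in a..b, k u) - y
      = (∫ u in a..b, k u * (φ u - y)) / ∫ u in a..b, k u := by
    simp only [mul_sub]
    rw [integral_sub hkφ (hk.mul_const y), intervalIntegral.integral_mul_const]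
    field_simp
  rw [hdiff, abs_div, abs_of_pos hpos]
  gcongr
  calc |∫ u in a..b, k u * (φ u - y)| ≤ ∫ u in a..b, |k u * (φ u - y)| :=
        abs_integral_le_integral_abs hab
    _ ≤ ∫ u in a..b, L * (k u * |u|) :=
        integral_mono_on hab hkφy.abs
          ((hk.mul_continuousOn continuous_abs.continuousOn).const_mul L) fun u hu => by
          rw [abs_mul, abs_of_nonneg (hk0 u), mul_left_comm]
          exact mul_le_mul_of_nonneg_left (hφy u hu) (hk0 u)
    _ = L * ∫ u in a..b, k u * |u| := intervalIntegral.integral_const_mul _ _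

theorem jackson_kernel_uniform_bound (m : ℕ) (hm : 0 < m) (f : ℝ → ℝ) (lam : ℝ)
    (hlip : ∀ x y : ℝ, |f x - f y| ≤ lam * |x - y|) :
    ∀ x : ℝ,
      |(∫ u in (-Real.pi)..Real.pi, jacksonKernel m u * f (x - u)) /
          (∫ u in (-Real.pi)..Real.pi, jacksonKernel m u) - f x| ≤ 9 * lam / m := by
  intro x
  have hm0 : (0 : ℝ) < m := Nat.cast_pos.2 hm
  have hlam : 0 ≤ lam := by simpa using (abs_nonneg _).trans (hlip 1 0)
  have hf : Continuous f :=
    (LipschitzWith.of_dist_le' (K := lam) (by simpa [dist_eq] using hlip)).continuous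
  have hB := jacksonKernel.mul_pow_three_le_integral hm
  have hM := jacksonKernel.integral_mul_abs_le hm
  calc _ ≤ lam * (∫ u in (-π)..π, jacksonKernel m u * |u|) / ∫ u in (-π)..π, jacksonKernel m u :=
        abs_integral_mul_div_integral_sub_le (by linarith [pi_pos]) (jacksonKernel.nonneg m)
          (jacksonKernel.intervalIntegrable m _ _) (by fun_prop)
          (fun u _ => by simpa using hlip (x - u) x)
          ((by positivity : (0 : ℝ) < 28 * m ^ 3 / 9).trans_le hB)
    _ ≤ lam * (2 * π ^ 2 * m ^ 2) / (28 * m ^ 3 / 9) := by gcongr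
    _ ≤ 9 * lam / m := by
        rw [div_le_div_iff₀ (by positivity) hm0]
        have hπ : π ^ 2 ≤ 14 := by nlinarith [pi_lt_d2, pi_pos]
        nlinarith [mul_nonneg (mul_nonneg hlam (pow_pos hm0 3).le) (sub_nonneg.2 hπ)]
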